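/- arXiv:1709.08177 — 2 statements merged into one kernel-verified Lean document; each statement's English description precedes it below -/
import Mathlib

section
/- Let D = D₁ ∪ D₂ be a union of two identical open balls in ℝ³ with disjoint closures that are symmetric with respect to the origin (D₂ = −D₁), and assume the map η ↦ S⁰_D[η] is injective on L²(∂D, σ). If η ∈ L²(∂D, σ) is such that S⁰_D[η] is equal to a constant c ∈ ℂ at every point of ∂D, then ∫_{∂D₁} η dσ = ∫_{∂D₂} η dσ. (This is the statement ∫_{∂D₁ − ∂D₂} (S⁰_D)⁻¹ S¹_D[φ] dσ = 0 of the paper, since S¹_D[φ] = −(i/4π) ∫_{∂D} φ dσ is a constant function on ∂D.) -/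
/-!
The reflection `x ↦ -x` maps the symmetric boundary `∂D` to itself, preserves the surface
measure and commutes with `S⁰_D`. Hence the reflected density `η(-·)` also has constant
potential `a` on `∂D`, and injectivity of `S⁰_D` forces `η` to be even. Integrating an even
density over `∂D₁` and over `∂D₂ = -∂D₁` gives the same charge.
-/

open MeasureTheory Metric Classical

noncomputable section

local notation "E3" => EuclideanSpace ℝ (Fin 3)

/-- The boundary `∂D = ∂D₁ ∪ ∂D₂` of the two-ball domain `D = D₁ ∪ D₂`. -/
def dimerBdry (c₁ c₂ : E3) (r₁ r₂ : ℝ) : Set E3 := sphere c₁ r₁ ∪ sphere c₂ r₂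

/-- The surface measure `σ`: 2-dimensional Hausdorff measure restricted to `∂D`. -/
def dimerMeas (c₁ c₂ : E3) (r₁ r₂ : ℝ) : Measure E3 :=
  (μH[2] : Measure E3).restrict (dimerBdry c₁ c₂ r₁ r₂)

/-- The quasi-static single layer potential
`S⁰_D[φ](x) = −(1/4π) ∫_{∂D} φ(y) |x−y|⁻¹ dσ(y)` (complex density). -/
def SL0 (c₁ c₂ : E3) (r₁ r₂ : ℝ) (φ : E3 → ℂ) (x : E3) : ℂ :=
  -(4 * (Real.pi : ℂ))⁻¹ * ∫ y in dimerBdry c₁ c₂ r₁ r₂, φ y * ((‖x - y‖⁻¹ : ℝ) : ℂ) ∂μH[2]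

/-- The map `η ↦ S⁰_D[η]` is injective on `L²(∂D, σ)`. -/
def SL0Injective (c₁ c₂ : E3) (r₁ r₂ : ℝ) : Prop :=
  ∀ η η' : E3 → ℂ, MemLp η 2 (dimerMeas c₁ c₂ r₁ r₂) →
    MemLp η' 2 (dimerMeas c₁ c₂ r₁ r₂) →
    (∀ᵐ x ∂(dimerMeas c₁ c₂ r₁ r₂), SL0 c₁ c₂ r₁ r₂ η x = SL0 c₁ c₂ r₁ r₂ η' x) →
    η =ᵐ[dimerMeas c₁ c₂ r₁ r₂] η'

open scoped Pointwise

section Reflection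

variable {E F : Type*} [NormedAddCommGroup E] [MeasurableSpace E] [BorelSpace E]
  [NormedAddCommGroup F] [NormedSpace ℝ F]

lemma measurePreserving_neg_hausdorffMeasure (d : ℝ) :
    MeasurePreserving (Neg.neg : E → E) μH[d] μH[d] :=
  (IsometryEquiv.neg E).measurePreserving_hausdorffMeasure d

lemma setIntegral_comp_neg_hausdorffMeasure (d : ℝ) (f : E → F) (s : Set E) :
    ∫ y in s, f (-y) ∂μH[d] = ∫ y in -s, f y ∂μH[d] := by
  simpa [Set.neg_preimage] using
    (measurePreserving_neg_hausdorffMeasure d).setIntegral_preimage_emb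
      (MeasurableEquiv.neg E).measurableEmbedding f (-s)

lemma measurePreserving_neg_restrict_hausdorffMeasure (d : ℝ) {s : Set E} (hs : -s = s) :
    MeasurePreserving (Neg.neg : E → E) (μH[d].restrict s) (μH[d].restrict s) := by
  simpa [Set.neg_preimage, hs] using
    (measurePreserving_neg_hausdorffMeasure d).restrict_preimage_emb
      (MeasurableEquiv.neg E).measurableEmbedding s

end Reflection

lemma neg_dimerBdry (c₁ c₂ : E3) (r₁ r₂ : ℝ) :
    -dimerBdry c₁ c₂ r₁ r₂ = dimerBdry (-c₁) (-c₂) r₁ r₂ := by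
  simp only [dimerBdry, Set.union_neg, neg_sphere]

lemma neg_dimerBdry_self (c : E3) (r : ℝ) : -dimerBdry c (-c) r r = dimerBdry c (-c) r r := by
  rw [neg_dimerBdry, neg_neg, dimerBdry, dimerBdry, Set.union_comm]

section SymmetricDimer

variable {c₁ c₂ : E3} {r₁ r₂ : ℝ}

lemma SL0_comp_neg (hsymm : -dimerBdry c₁ c₂ r₁ r₂ = dimerBdry c₁ c₂ r₁ r₂) (η : E3 → ℂ)
    (x : E3) : SL0 c₁ c₂ r₁ r₂ (fun y => η (-y)) x = SL0 c₁ c₂ r₁ r₂ η (-x) := by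
  have hkernel : ∀ y : E3, ‖x - y‖ = ‖-x - -y‖ := fun y => by rw [neg_sub_neg, norm_sub_rev]
  simp only [SL0, hkernel]
  rw [setIntegral_comp_neg_hausdorffMeasure 2 (fun z => η z * ((‖-x - z‖⁻¹ : ℝ) : ℂ)), hsymm]

lemma ae_eq_comp_neg_of_SL0_eq_const (hsymm : -dimerBdry c₁ c₂ r₁ r₂ = dimerBdry c₁ c₂ r₁ r₂)
    (hinj : SL0Injective c₁ c₂ r₁ r₂) {η : E3 → ℂ} (hη : MemLp η 2 (dimerMeas c₁ c₂ r₁ r₂))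
    {a : ℂ} (hconst : ∀ x ∈ dimerBdry c₁ c₂ r₁ r₂, SL0 c₁ c₂ r₁ r₂ η x = a) :
    η =ᵐ[dimerMeas c₁ c₂ r₁ r₂] fun y => η (-y) := by
  have hηneg : MemLp (fun y => η (-y)) 2 (dimerMeas c₁ c₂ r₁ r₂) :=
    hη.comp_measurePreserving (measurePreserving_neg_restrict_hausdorffMeasure 2 hsymm)
  refine hinj _ _ hη hηneg ?_
  have hmeas : MeasurableSet (dimerBdry c₁ c₂ r₁ r₂) :=
    (isClosed_sphere.union isClosed_sphere).measurableSet
  rw [dimerMeas, ae_restrict_iff' hmeas]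
  refine Filter.Eventually.of_forall fun x hx => ?_
  have hnegx : -x ∈ dimerBdry c₁ c₂ r₁ r₂ := by rwa [← hsymm, Set.neg_mem_neg]
  rw [SL0_comp_neg hsymm, hconst x hx, hconst (-x) hnegx]

end SymmetricDimer

theorem constant_potential_balanced_charge_general
    (c : E3) (r : ℝ)
    (hinj : SL0Injective c (-c) r r)
    (η : E3 → ℂ) (hη : MemLp η 2 (dimerMeas c (-c) r r))
    (a : ℂ) (hconst : ∀ x ∈ dimerBdry c (-c) r r, SL0 c (-c) r r η x = a) :
    ∫ y in sphere c r, η y ∂μH[2] = ∫ y in sphere (-c) r, η y ∂μH[2] := by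
  have heven : η =ᵐ[dimerMeas c (-c) r r] fun y => η (-y) :=
    ae_eq_comp_neg_of_SL0_eq_const (neg_dimerBdry_self c r) hinj hη hconst
  calc ∫ y in sphere c r, η y ∂μH[2]
      = ∫ y in sphere c r, η (-y) ∂μH[2] :=
        integral_congr_ae (ae_restrict_of_ae_restrict_of_subset Set.subset_union_left heven)
    _ = ∫ y in -sphere c r, η y ∂μH[2] := setIntegral_comp_neg_hausdorffMeasure 2 η _
    _ = ∫ y in sphere (-c) r, η y ∂μH[2] := by rw [neg_sphere]

/-- for a symmetric dimer (`D₂ = −D₁`), if `S⁰_D[η]` is constant on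
`∂D`, then `∫_{∂D₁} η dσ = ∫_{∂D₂} η dσ`. -/
theorem constant_potential_balanced_charge
    (c : E3) (r : ℝ) (hr : 0 < r)
    (hdisj : Disjoint (closedBall c r) (closedBall (-c) r))
    (hinj : SL0Injective c (-c) r r)
    (η : E3 → ℂ) (hη : MemLp η 2 (dimerMeas c (-c) r r))
    (a : ℂ) (hconst : ∀ x ∈ dimerBdry c (-c) r r, SL0 c (-c) r r η x = a) :
    ∫ y in sphere c r, η y ∂μH[2] = ∫ y in sphere (-c) r, η y ∂μH[2] :=
  constant_potential_balanced_charge_general c r hinj η hη a hconst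
end
end

section
/- Let D = D₁ ∪ D₂ be a union of two identical open balls in ℝ³ with disjoint closures, symmetric with respect to the origin (D₂ = −D₁), both centered on the x₁-axis, and assume the map η ↦ S⁰_D[η] is injective on L²(∂D, σ). Let ψ₁, ψ₂ ∈ L²(∂D, σ) satisfy S⁰_D[ψ₁] = 1 on ∂D₁, S⁰_D[ψ₁] = 0 on ∂D₂, S⁰_D[ψ₂] = 0 on ∂D₁, S⁰_D[ψ₂] = 1 on ∂D₂. Then ∫_{∂D} y₂ (ψ₁(y) − ψ₂(y)) dσ(y) = 0 and ∫_{∂D} y₃ (ψ₁(y) − ψ₂(y)) dσ(y) = 0. -/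
open MeasureTheory Metric Classical

noncomputable section

local notation "E3" => EuclideanSpace ℝ (Fin 3)

/-!
Reflection in the hyperplane orthogonal to `eᵢ` (`i = 2, 3`) fixes both centres, so it maps each
sphere to itself and preserves the surface measure and the kernel `|x - y|⁻¹`. Hence it commutes with
`S⁰_D`, and a density whose potential is constant on each sphere is mapped to another density with the
same boundary values; by injectivity, `ψ₁` and `ψ₂` are reflection-invariant. The moment `yᵢ` is odd
under the reflection, so its integral against the invariant density `ψ₁ - ψ₂` vanishes.
-/

theorem integral_eq_zero_of_comp_ae_eq_neg {α E : Type*} [MeasurableSpace α]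
    [NormedAddCommGroup E] [NormedSpace ℝ E] {μ : Measure α} {e : α → α}
    (he : MeasurePreserving e μ μ) (he' : MeasurableEmbedding e) {f : α → E}
    (hf : f ∘ e =ᵐ[μ] -f) : ∫ x, f x ∂μ = 0 := by
  have : IsAddTorsionFree E := .of_isTorsionFree ℝ E
  rw [← self_eq_neg, ← integral_neg]
  calc ∫ x, f x ∂μ = ∫ x, f (e x) ∂μ := (he.integral_comp he' f).symm
    _ = ∫ x, -f x ∂μ := integral_congr_ae hf

section Reflection

variable {F : Type*} [NormedAddCommGroup F] [InnerProductSpace ℝ F]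

theorem reflection_orthogonal_singleton_eq_self {v u : F} (h : inner ℝ v u = 0) :
    (ℝ ∙ v)ᗮ.reflection u = u :=
  Submodule.reflection_mem_subspace_eq_self
    (Submodule.mem_orthogonal_singleton_iff_inner_right.mpr h)

theorem inner_reflection_orthogonal_singleton (v y : F) :
    inner ℝ v ((ℝ ∙ v)ᗮ.reflection y) = -inner ℝ v y := by
  rw [← ((ℝ ∙ v)ᗮ.reflection).inner_map_map, Submodule.reflection_reflection,
    Submodule.reflection_orthogonalComplement_singleton_eq_neg, inner_neg_left]

end Reflection

section Symmetry

variable {c₁ c₂ : E3} {r₁ r₂ : ℝ} {e : E3 ≃ᵢ E3}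

theorem IsometryEquiv.preimage_sphere_of_apply_eq {c : E3} (h : e c = c) (r : ℝ) :
    e ⁻¹' sphere c r = sphere c r := by
  rw [e.preimage_sphere, e.symm_apply_eq.mpr h.symm]

theorem measurableSet_dimerBdry : MeasurableSet (dimerBdry c₁ c₂ r₁ r₂) :=
  (isClosed_sphere.union isClosed_sphere).measurableSet

theorem IsometryEquiv.preimage_dimerBdry (h₁ : e c₁ = c₁) (h₂ : e c₂ = c₂) :
    e ⁻¹' dimerBdry c₁ c₂ r₁ r₂ = dimerBdry c₁ c₂ r₁ r₂ := by
  rw [dimerBdry, Set.preimage_union, e.preimage_sphere_of_apply_eq h₁,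
    e.preimage_sphere_of_apply_eq h₂]

theorem IsometryEquiv.measurePreserving_dimerMeas (h₁ : e c₁ = c₁) (h₂ : e c₂ = c₂) :
    MeasurePreserving e (dimerMeas c₁ c₂ r₁ r₂) (dimerMeas c₁ c₂ r₁ r₂) := by
  have := (e.measurePreserving_hausdorffMeasure 2).restrict_preimage
    (measurableSet_dimerBdry (c₁ := c₁) (c₂ := c₂) (r₁ := r₁) (r₂ := r₂))
  rwa [e.preimage_dimerBdry h₁ h₂] at this

theorem IsometryEquiv.SL0_comp (h₁ : e c₁ = c₁) (h₂ : e c₂ = c₂) (ψ : E3 → ℂ) (x : E3) :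
    SL0 c₁ c₂ r₁ r₂ (ψ ∘ e) x = SL0 c₁ c₂ r₁ r₂ ψ (e x) := by
  have hker : ∀ y, ‖x - y‖ = ‖e x - e y‖ := fun y => by
    simp only [← dist_eq_norm, e.dist_eq]
  simp only [SL0, Function.comp_apply, hker]
  congr 1
  exact (e.measurePreserving_dimerMeas h₁ h₂).integral_comp e.toHomeomorph.measurableEmbedding
    (fun z => ψ z * ((‖e x - z‖⁻¹ : ℝ) : ℂ))

theorem SL0Injective.comp_ae_eq (hinj : SL0Injective c₁ c₂ r₁ r₂)
    (h₁ : e c₁ = c₁) (h₂ : e c₂ = c₂) {ψ : E3 → ℂ} (hψ : MemLp ψ 2 (dimerMeas c₁ c₂ r₁ r₂))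
    {a b : ℂ} (ha : ∀ x ∈ sphere c₁ r₁, SL0 c₁ c₂ r₁ r₂ ψ x = a)
    (hb : ∀ x ∈ sphere c₂ r₂, SL0 c₁ c₂ r₁ r₂ ψ x = b) :
    ψ ∘ e =ᵐ[dimerMeas c₁ c₂ r₁ r₂] ψ := by
  refine hinj _ _ (hψ.comp_measurePreserving (e.measurePreserving_dimerMeas h₁ h₂)) hψ ?_
  filter_upwards [ae_restrict_mem measurableSet_dimerBdry] with x hx
  rw [e.SL0_comp h₁ h₂]
  rcases hx with hx | hx
  · rw [ha x hx, ha (e x) (by rwa [← e.preimage_sphere_of_apply_eq h₁] at hx)]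
  · rw [hb x hx, hb (e x) (by rwa [← e.preimage_sphere_of_apply_eq h₂] at hx)]

theorem integral_inner_mul_eq_zero_of_reflection_invariant {v : E3}
    (hv₁ : inner ℝ v c₁ = 0) (hv₂ : inner ℝ v c₂ = 0) {φ : E3 → ℂ}
    (hφ : φ ∘ (ℝ ∙ v)ᗮ.reflection =ᵐ[dimerMeas c₁ c₂ r₁ r₂] φ) :
    ∫ y in dimerBdry c₁ c₂ r₁ r₂, ((inner ℝ v y : ℝ) : ℂ) * φ y ∂μH[2] = 0 := by
  set R := ((ℝ ∙ v)ᗮ.reflection).toIsometryEquiv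
  refine integral_eq_zero_of_comp_ae_eq_neg (e := R)
    (R.measurePreserving_dimerMeas (reflection_orthogonal_singleton_eq_self hv₁)
      (reflection_orthogonal_singleton_eq_self hv₂)) R.toHomeomorph.measurableEmbedding ?_
  filter_upwards [hφ] with y hy
  simp only [Function.comp_apply, Pi.neg_apply] at hy ⊢
  rw [show R y = (ℝ ∙ v)ᗮ.reflection y from rfl, hy, inner_reflection_orthogonal_singleton]
  push_cast
  ring

end Symmetry

theorem transverse_dipole_moments_vanish_general
    (c : E3) (r : ℝ)
    (haxis : ∀ i : Fin 3, i ≠ 0 → c i = 0)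
    (hinj : SL0Injective c (-c) r r)
    (ψ₁ ψ₂ : E3 → ℂ)
    (hψ₁ : MemLp ψ₁ 2 (dimerMeas c (-c) r r))
    (hψ₂ : MemLp ψ₂ 2 (dimerMeas c (-c) r r))
    (hψ₁1 : ∀ x ∈ sphere c r, SL0 c (-c) r r ψ₁ x = 1)
    (hψ₁2 : ∀ x ∈ sphere (-c) r, SL0 c (-c) r r ψ₁ x = 0)
    (hψ₂1 : ∀ x ∈ sphere c r, SL0 c (-c) r r ψ₂ x = 0)
    (hψ₂2 : ∀ x ∈ sphere (-c) r, SL0 c (-c) r r ψ₂ x = 1) :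
    (∫ y in dimerBdry c (-c) r r, ((y 1 : ℝ) : ℂ) * (ψ₁ y - ψ₂ y) ∂μH[2] = 0) ∧
    (∫ y in dimerBdry c (-c) r r, ((y 2 : ℝ) : ℂ) * (ψ₁ y - ψ₂ y) ∂μH[2] = 0) := by
  have transverse : ∀ i : Fin 3, c i = 0 →
      ∫ y in dimerBdry c (-c) r r, ((y i : ℝ) : ℂ) * (ψ₁ y - ψ₂ y) ∂μH[2] = 0 := by
    intro i hi
    set v : E3 := EuclideanSpace.single i 1
    have hv₁ : inner ℝ v c = 0 := by simp [v, EuclideanSpace.inner_single_left, hi]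
    have hv₂ : inner ℝ v (-c) = 0 := by rw [inner_neg_right, hv₁, neg_zero]
    set R := ((ℝ ∙ v)ᗮ.reflection).toIsometryEquiv
    have hR₁ : R c = c := reflection_orthogonal_singleton_eq_self hv₁
    have hR₂ : R (-c) = -c := reflection_orthogonal_singleton_eq_self hv₂
    have hinv := (hinj.comp_ae_eq hR₁ hR₂ hψ₁ hψ₁1 hψ₁2).sub
      (hinj.comp_ae_eq hR₁ hR₂ hψ₂ hψ₂1 hψ₂2)
    simpa [v, EuclideanSpace.inner_single_left] using
      integral_inner_mul_eq_zero_of_reflection_invariant hv₁ hv₂ hinv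
  exact ⟨transverse 1 (haxis 1 (by decide)), transverse 2 (haxis 2 (by decide))⟩

/-- for a symmetric dimer (`D₂ = −D₁`) centered on the `x₁`-axis,
`∫_{∂D} y₂ (ψ₁ − ψ₂) dσ = 0` and `∫_{∂D} y₃ (ψ₁ − ψ₂) dσ = 0`. -/
theorem transverse_dipole_moments_vanish
    (c : E3) (r : ℝ) (hr : 0 < r)
    (haxis : ∀ i : Fin 3, i ≠ 0 → c i = 0)
    (hdisj : Disjoint (closedBall c r) (closedBall (-c) r))
    (hinj : SL0Injective c (-c) r r)
    (ψ₁ ψ₂ : E3 → ℂ)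
    (hψ₁ : MemLp ψ₁ 2 (dimerMeas c (-c) r r))
    (hψ₂ : MemLp ψ₂ 2 (dimerMeas c (-c) r r))
    (hψ₁1 : ∀ x ∈ sphere c r, SL0 c (-c) r r ψ₁ x = 1)
    (hψ₁2 : ∀ x ∈ sphere (-c) r, SL0 c (-c) r r ψ₁ x = 0)
    (hψ₂1 : ∀ x ∈ sphere c r, SL0 c (-c) r r ψ₂ x = 0)
    (hψ₂2 : ∀ x ∈ sphere (-c) r, SL0 c (-c) r r ψ₂ x = 1) :
    (∫ y in dimerBdry c (-c) r r, ((y 1 : ℝ) : ℂ) * (ψ₁ y - ψ₂ y) ∂μH[2] = 0) ∧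
    (∫ y in dimerBdry c (-c) r r, ((y 2 : ℝ) : ℂ) * (ψ₁ y - ψ₂ y) ∂μH[2] = 0) :=
  transverse_dipole_moments_vanish_general c r haxis hinj ψ₁ ψ₂ hψ₁ hψ₂ hψ₁1 hψ₁2 hψ₂1 hψ₂2
end
end
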